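/- For every coloring with k colors of the vertices of a complete binary tree of depth n ≥ d·k, there exists a monochromatic complete subtree of depth d. -/

import Mathlib

/-- Vertices of the complete binary tree are bit strings (`List Bool`).
`SubtreeMap n d f` : `f` embeds the complete binary tree of depth `d` as a subtree
(preserving left/right descendant relations) of the complete binary tree of depth `n`. -/
def SubtreeMap (n d : ℕ) (f : List Bool → List Bool) : Prop :=
  (∀ s : List Bool, s.length ≤ d → (f s).length ≤ n) ∧
  (∀ s : List Bool, ∀ b : Bool, s.length < d → f s ++ [b] <+: f (s ++ [b]))

namespace PFT

variable {k : ℕ}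

/-- A `c`-monochromatic subtree of depth `j` rooted at `v`, inside the depth-`n` tree. -/
def Mono (n : ℕ) (χ : List Bool → Fin k) (c : Fin k) (j : ℕ) (v : List Bool) : Prop :=
  ∃ f, SubtreeMap n j f ∧ f [] = v ∧ ∀ s : List Bool, s.length ≤ j → χ (f s) = c

/-- `Pot n χ c u P` : for every `c`-monochromatic depth-`j` subtree rooted at an extension
of `u`, we have `u.length + j + 1 ≤ P`.  ("length of u plus c-height below u is ≤ P") -/
def Pot (n : ℕ) (χ : List Bool → Fin k) (c : Fin k) (u : List Bool) (P : ℕ) : Prop :=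
  ∀ j v, u <+: v → Mono n χ c j v → u.length + j + 1 ≤ P

lemma mono_zero {n : ℕ} {χ : List Bool → Fin k} {c : Fin k} {v : List Bool}
    (hv : v.length ≤ n) (hc : χ v = c) : Mono n χ c 0 v :=
  ⟨fun _ => v, ⟨fun _ _ => hv, fun _ _ hs => absurd hs (by omega)⟩, rfl, fun _ _ => hc⟩

lemma mono_down {n : ℕ} {χ : List Bool → Fin k} {c : Fin k} {j i : ℕ} {v : List Bool}
    (h : Mono n χ c j v) (hij : i ≤ j) : Mono n χ c i v := by
  obtain ⟨f, ⟨h1, h2⟩, h3, h4⟩ := h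
  exact ⟨f, ⟨fun s hs => h1 s (hs.trans hij), fun s b hs => h2 s b (lt_of_lt_of_le hs hij)⟩,
    h3, fun s hs => h4 s (hs.trans hij)⟩

lemma mono_combine {n : ℕ} {χ : List Bool → Fin k} {c : Fin k} {j : ℕ} {w : List Bool}
    (hw : w.length ≤ n) (hc : χ w = c)
    (h : ∀ b : Bool, ∃ v, w ++ [b] <+: v ∧ Mono n χ c j v) :
    Mono n χ c (j + 1) w := by
  obtain ⟨vf, hvf, ff, ⟨hf1, hf2⟩, hf3, hf4⟩ := h false
  obtain ⟨vt, hvt, ft, ⟨ht1, ht2⟩, ht3, ht4⟩ := h true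
  refine ⟨fun s => match s with | [] => w | b :: s' => (cond b ft ff) s', ⟨?_, ?_⟩, rfl, ?_⟩
  · intro s hs
    match s with
    | [] => exact hw
    | b :: s' =>
      cases b
      · exact hf1 s' (by simpa using hs)
      · exact ht1 s' (by simpa using hs)
  · intro s b hs
    match s with
    | [] =>
      cases b
      · show w ++ [false] <+: ff []
        rw [hf3]; exact hvf
      · show w ++ [true] <+: ft []
        rw [ht3]; exact hvt
    | b0 :: s' =>
      have hs' : s'.length < j := by simpa using hs
      cases b0
      · exact hf2 s' b hs'
      · exact ht2 s' b hs'
  · intro s hs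
    match s with
    | [] => exact hc
    | b :: s' =>
      have hs' : s'.length ≤ j := by simpa using hs
      cases b
      · exact hf4 s' hs'
      · exact ht4 s' hs'

lemma pot_mono {n : ℕ} {χ : List Bool → Fin k} {c : Fin k} {u : List Bool} {P P' : ℕ}
    (h : Pot n χ c u P) (hP : P ≤ P') : Pot n χ c u P' :=
  fun j v h1 h2 => (h j v h1 h2).trans hP

lemma branch {n : ℕ} {χ : List Bool → Fin k} {c : Fin k} {w : List Bool} {P : ℕ}
    (hw : w.length ≤ n) (hc : χ w = c) (hPot : Pot n χ c w P) :
    ∃ b : Bool, Pot n χ c (w ++ [b]) P := by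
  classical
  set ρ := Nat.findGreatest (fun j => Mono n χ c j w) P with hρdef
  have hρ : Mono n χ c ρ w :=
    Nat.findGreatest_spec (P := fun j => Mono n χ c j w) (Nat.zero_le P) (mono_zero hw hc)
  have hlt : w.length + ρ + 1 ≤ P := hPot ρ w List.prefix_rfl hρ
  have hmax : ¬ Mono n χ c (ρ + 1) w :=
    Nat.findGreatest_is_greatest (Nat.lt_succ_self ρ) (by omega)
  by_contra hcon
  push_neg at hcon
  apply hmax
  apply mono_combine hw hc
  intro b
  have hb := hcon b
  unfold Pot at hb
  push_neg at hb
  obtain ⟨j, v, hpre, hm, hlen⟩ := hb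
  have hl : (w ++ [b]).length = w.length + 1 := by simp
  rw [hl] at hlen
  exact ⟨v, hpre, mono_down hm (by omega)⟩

lemma escape {n : ℕ} {χ : List Bool → Fin k} {c : Fin k} {P : ℕ} (hPn : P ≤ n) :
    ∀ (fuel : ℕ) (u : List Bool), P ≤ u.length + fuel → u.length ≤ P →
      Pot n χ c u P →
      ∃ v, u <+: v ∧ χ v ≠ c ∧ Pot n χ c v P ∧ v.length ≤ P := by
  intro fuel
  induction fuel with
  | zero =>
    intro u hfuel hu hPot
    by_cases hc : χ u = c
    · have := hPot 0 u List.prefix_rfl (mono_zero (hu.trans hPn) hc)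
      omega
    · exact ⟨u, List.prefix_rfl, hc, hPot, hu⟩
  | succ fuel ih =>
    intro u hfuel hu hPot
    by_cases hc : χ u = c
    · have hlen : u.length + 1 ≤ P := hPot 0 u List.prefix_rfl (mono_zero (hu.trans hPn) hc)
      obtain ⟨b, hb⟩ := branch (hu.trans hPn) hc hPot
      obtain ⟨v, h1, h2, h3, h4⟩ := ih (u ++ [b]) (by simp; omega) (by simp; omega) hb
      exact ⟨v, (u.prefix_append [b]).trans h1, h2, h3, h4⟩
    · exact ⟨u, List.prefix_rfl, hc, hPot, hu⟩

open Classical in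
/-- Choice function: escape from `u` to a non-`c`-colored extension, keeping the potential. -/
noncomputable def esc (n : ℕ) (χ : List Bool → Fin k) (c : Fin k) (u : List Bool) (P : ℕ) :
    List Bool :=
  if h : ∃ v, u <+: v ∧ χ v ≠ c ∧ Pot n χ c v P ∧ v.length ≤ P then h.choose else []

lemma esc_spec {n : ℕ} {χ : List Bool → Fin k} {c : Fin k} {u : List Bool} {P : ℕ}
    (hPn : P ≤ n) (hu : u.length ≤ P) (hPot : Pot n χ c u P) :
    u <+: esc n χ c u P ∧ χ (esc n χ c u P) ≠ c ∧ Pot n χ c (esc n χ c u P) P ∧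
      (esc n χ c u P).length ≤ P := by
  have h : ∃ v, u <+: v ∧ χ v ≠ c ∧ Pot n χ c v P ∧ v.length ≤ P :=
    escape hPn P u (by omega) hu hPot
  rw [esc, dif_pos h]
  exact h.choose_spec

/-- The avoiding embedding, with input strings reversed (children are prepended). -/
noncomputable def gaux (n : ℕ) (χ : List Bool → Fin k) (c : Fin k) (d : ℕ) :
    List Bool → List Bool
  | [] => esc n χ c [] d
  | b :: t => esc n χ c (gaux n χ c d t ++ [b]) (t.length + 1 + d)

lemma gaux_key {n : ℕ} {χ : List Bool → Fin k} {c : Fin k} {d : ℕ}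
    (hno : ∀ j v, Mono n χ c j v → j + 1 ≤ d) :
    ∀ t : List Bool, t.length + d ≤ n →
      χ (gaux n χ c d t) ≠ c ∧ Pot n χ c (gaux n χ c d t) (t.length + d) ∧
        (gaux n χ c d t).length ≤ t.length + d := by
  intro t
  induction t with
  | nil =>
    intro h
    have hPot : Pot n χ c [] d := by
      intro j v _ hm
      have := hno j v hm
      simp only [List.length_nil]
      omega
    have hs := esc_spec (by simpa using h) (by simp) hPot
    refine ⟨hs.2.1, ?_, ?_⟩
    · simpa [gaux] using hs.2.2.1
    · simpa [gaux] using hs.2.2.2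
  | cons b t iht =>
    intro h
    have hln : t.length + 1 + d ≤ n := by simpa using h
    obtain ⟨hc1, hc2, hc3⟩ := iht (by omega)
    have hu : (gaux n χ c d t ++ [b]).length ≤ t.length + 1 + d := by
      simp only [List.length_append, List.length_cons, List.length_nil]
      omega
    have hPot : Pot n χ c (gaux n χ c d t ++ [b]) (t.length + 1 + d) := by
      intro j v hpre hm
      have := hc2 j v (((gaux n χ c d t).prefix_append [b]).trans hpre) hm
      simp only [List.length_append, List.length_cons, List.length_nil]
      omega
    have hs := esc_spec hln hu hPot
    refine ⟨hs.2.1, ?_, ?_⟩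
    · have : (b :: t).length + d = t.length + 1 + d := by simp
      rw [this]
      exact hs.2.2.1
    · have : (b :: t).length + d = t.length + 1 + d := by simp
      rw [this]
      exact hs.2.2.2

lemma gaux_step {n : ℕ} {χ : List Bool → Fin k} {c : Fin k} {d : ℕ}
    (hno : ∀ j v, Mono n χ c j v → j + 1 ≤ d) :
    ∀ (t : List Bool) (b : Bool), t.length + 1 + d ≤ n →
      gaux n χ c d t ++ [b] <+: gaux n χ c d (b :: t) := by
  intro t b hln
  obtain ⟨hc1, hc2, hc3⟩ := gaux_key hno t (by omega)
  have hu : (gaux n χ c d t ++ [b]).length ≤ t.length + 1 + d := by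
    simp only [List.length_append, List.length_cons, List.length_nil]
    omega
  have hPot : Pot n χ c (gaux n χ c d t ++ [b]) (t.length + 1 + d) := by
    intro j v hpre hm
    have := hc2 j v (((gaux n χ c d t).prefix_append [b]).trans hpre) hm
    simp only [List.length_append, List.length_cons, List.length_nil]
    omega
  exact (esc_spec hln hu hPot).1

lemma avoid {n : ℕ} {χ : List Bool → Fin k} {c : Fin k} {d : ℕ}
    (hno : ∀ j v, Mono n χ c j v → j + 1 ≤ d) :
    ∃ g : List Bool → List Bool,
      (∀ s : List Bool, s.length + d ≤ n → χ (g s) ≠ c ∧ (g s).length ≤ s.length + d) ∧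
      ∀ s : List Bool, ∀ b : Bool, s.length + 1 + d ≤ n → g s ++ [b] <+: g (s ++ [b]) := by
  refine ⟨fun s => gaux n χ c d s.reverse, ?_, ?_⟩
  · intro s hs
    have := gaux_key hno s.reverse (by simpa using hs)
    exact ⟨this.1, by simpa using this.2.2⟩
  · intro s b hs
    have hrev : (s ++ [b]).reverse = b :: s.reverse := by simp
    show gaux n χ c d s.reverse ++ [b] <+: gaux n χ c d (s ++ [b]).reverse
    rw [hrev]
    exact gaux_step hno s.reverse b (by simpa using hs)

lemma step_prefix {g : List Bool → List Bool} {d n : ℕ}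
    (hstep : ∀ s : List Bool, ∀ b : Bool, s.length + 1 + d ≤ n → g s ++ [b] <+: g (s ++ [b])) :
    ∀ (r u : List Bool), (u ++ r).length + d ≤ n → g u <+: g (u ++ r) := by
  intro r
  induction r using List.reverseRecOn with
  | nil => intro u _; rw [List.append_nil]
  | append_singleton r b ih =>
    intro u h
    rw [← List.append_assoc]
    have hl : (u ++ (r ++ [b])).length = (u ++ r).length + 1 := by
      simp only [List.length_append, List.length_cons, List.length_nil]
      omega
    refine (ih u (by omega)).trans ?_
    refine ((g (u ++ r)).prefix_append [b]).trans (hstep (u ++ r) b (by omega))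

lemma aux (d k : ℕ) : ∀ (m n : ℕ) (χ : List Bool → Fin k) (S : Finset (Fin k)),
    S.card ≤ m → d * S.card ≤ n → (∀ v : List Bool, v.length ≤ n → χ v ∈ S) →
    ∃ c f, SubtreeMap n d f ∧ ∀ s : List Bool, s.length ≤ d → χ (f s) = c := by
  intro m
  induction m with
  | zero =>
    intro n χ S hcard _ hS
    have h0 : S = ∅ := Finset.card_eq_zero.mp (Nat.le_zero.mp hcard)
    have := hS [] (by simp)
    rw [h0] at this
    exact absurd this (Finset.notMem_empty _)
  | succ m ih =>
    intro n χ S hcard hn hS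
    by_cases hex : ∃ c f, SubtreeMap n d f ∧ ∀ s : List Bool, s.length ≤ d → χ (f s) = c
    · exact hex
    set c := χ [] with hcdef
    have hcS : c ∈ S := hS [] (by simp)
    have hS1 : 1 ≤ S.card := Finset.card_pos.mpr ⟨c, hcS⟩
    have hdn : d ≤ n := by
      have : d * 1 ≤ d * S.card := Nat.mul_le_mul_left d hS1
      omega
    have hno : ∀ j v, Mono n χ c j v → j + 1 ≤ d := by
      intro j v hm
      by_contra hlt
      push_neg at hlt
      obtain ⟨f, hf, _, hmono⟩ := mono_down hm (show d ≤ j by omega)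
      exact hex ⟨c, f, hf, hmono⟩
    obtain ⟨g, hg1, hg2⟩ := avoid hno
    obtain ⟨t, ht⟩ : ∃ t, S.card = t + 1 := ⟨S.card - 1, by omega⟩
    have hmul : d * t ≤ n - d := by
      rw [ht, Nat.mul_succ] at hn
      omega
    have hrec := ih (n - d) (fun v => χ (g v)) (S.erase c)
      (by rw [Finset.card_erase_of_mem hcS]; omega)
      (by rw [Finset.card_erase_of_mem hcS, ht]; simpa using hmul)
      ?_
    · obtain ⟨c', f', ⟨hf1, hf2⟩, hmono'⟩ := hrec
      refine ⟨c', fun s => g (f' s), ⟨?_, ?_⟩, ?_⟩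
      · intro s hs
        show (g (f' s)).length ≤ n
        have h1 : (f' s).length ≤ n - d := hf1 s hs
        have := (hg1 (f' s) (by omega)).2
        omega
      · intro s b hs
        show g (f' s) ++ [b] <+: g (f' (s ++ [b]))
        have hpre := hf2 s b hs
        have h2 : (f' (s ++ [b])).length ≤ n - d := hf1 (s ++ [b]) (by simpa using hs)
        have hlen : (f' s).length + 1 ≤ n - d := by
          have := hpre.length_le
          simp only [List.length_append, List.length_cons, List.length_nil] at this
          omega
        refine (hg2 (f' s) b (by omega)).trans ?_
        obtain ⟨r, hr⟩ := hpre
        rw [← hr]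
        exact step_prefix hg2 r (f' s ++ [b]) (by rw [hr]; omega)
      · intro s hs
        exact hmono' s hs
    · intro v hv
      have hgv := hg1 v (by omega)
      refine Finset.mem_erase.mpr ⟨hgv.1, hS (g v) ?_⟩
      have := hgv.2
      omega

end PFT

/-- For every coloring with `k` colors of the vertices of the complete binary tree of depth
`n ≥ d·k`, there exists a monochromatic complete subtree of depth `d`. -/
theorem pigeonhole_for_trees (n d k : ℕ) (hk : 0 < k) (hn : d * k ≤ n)
    (χ : List Bool → Fin k) :
    ∃ c : Fin k, ∃ f : List Bool → List Bool, SubtreeMap n d f ∧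
      ∀ s : List Bool, s.length ≤ d → χ (f s) = c := by
  obtain ⟨c, f, h1, h2⟩ := PFT.aux d k k n χ Finset.univ (by simp) (by simpa using hn)
    (fun v _ => Finset.mem_univ _)
  exact ⟨c, f, h1, h2⟩
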